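/- Let p be a prime. The derived limit lim¹ of the inverse sequence (⋯ →·p→ ℤ →·p→ ℤ), i.e. the cokernel of the group homomorphism ∏_{i∈ℕ} ℤ → ∏_{i∈ℕ} ℤ given by (g₀,g₁,g₂,…) ↦ (g₀ − p·g₁, g₁ − p·g₂, g₂ − p·g₃, …), is isomorphic as an abelian group to ℤ_p/ℤ, the quotient of the additive group of p-adic integers by the subgroup of ordinary integers. -/

import Mathlib

/-!
Summing `∑ p ^ j * g j` maps `∏ ℤ` onto `ℤ_[p]` (every `x` has a `p`-adic expansion) and sends the
image `f i - p * f (i + 1)` of `f` to the integer `f 0` by telescoping, so it induces a surjection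
from `lim¹` onto `ℤ_[p] ⧸ ℤ`. It is injective: if `∑ p ^ j * g j` is an integer then so is every
tail `f i = ∑ p ^ j * g (i + j)`, since an integer divisible by `p` in `ℤ_[p]` is divisible by `p`
in `ℤ`, and these tails satisfy `f i - p * f (i + 1) = g i`.
-/

namespace PadicInt

variable {p : ℕ} [Fact p.Prime]

lemma norm_p_pow_mul_le (n : ℕ) (x : ℤ_[p]) : ‖(p : ℤ_[p]) ^ n * x‖ ≤ (p : ℝ)⁻¹ ^ n := by
  rw [norm_mul, norm_pow, norm_p]
  exact mul_le_of_le_one_right (by positivity) (norm_le_one x)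

lemma summable_p_pow_mul (x : ℕ → ℤ_[p]) : Summable fun j ↦ (p : ℤ_[p]) ^ j * x j := by
  refine .of_norm_bounded (summable_geometric_of_lt_one (by positivity) ?_)
    fun j ↦ norm_p_pow_mul_le j (x j)
  exact inv_lt_one_of_one_lt₀ (mod_cast (Fact.out : p.Prime).one_lt)

variable (p) in
noncomputable def pSeries : (ℕ → ℤ_[p]) →ₗ[ℤ_[p]] ℤ_[p] where
  toFun x := ∑' j, (p : ℤ_[p]) ^ j * x j
  map_add' x y := by
    simp only [Pi.add_apply, mul_add]
    exact (summable_p_pow_mul x).tsum_add (summable_p_pow_mul y)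
  map_smul' c x := by
    simp only [Pi.smul_apply, smul_eq_mul, RingHom.id_apply, mul_left_comm _ c]
    exact (summable_p_pow_mul x).tsum_mul_left c

lemma pSeries_apply (x : ℕ → ℤ_[p]) : pSeries p x = ∑' j, (p : ℤ_[p]) ^ j * x j := rfl

lemma pSeries_eq_add_p_mul (x : ℕ → ℤ_[p]) :
    pSeries p x = x 0 + p * pSeries p (fun j ↦ x (j + 1)) := by
  rw [pSeries_apply, (summable_p_pow_mul x).tsum_eq_zero_add, pSeries_apply,
    ← (summable_p_pow_mul _).tsum_mul_left]
  simp only [pow_zero, one_mul, pow_succ, mul_assoc, mul_left_comm (p : ℤ_[p])]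

lemma pSeries_tail_eq_add_p_mul (x : ℕ → ℤ_[p]) (i : ℕ) :
    pSeries p (fun j ↦ x (i + j)) = x i + p * pSeries p (fun j ↦ x (i + 1 + j)) := by
  rw [pSeries_eq_add_p_mul (fun j ↦ x (i + j)), add_zero]
  simp only [add_right_comm _ 1, add_assoc]

lemma pSeries_sub_p_smul_shift (x : ℕ → ℤ_[p]) :
    pSeries p (x - (p : ℤ_[p]) • fun j ↦ x (j + 1)) = x 0 := by
  rw [map_sub, map_smul, pSeries_eq_add_p_mul x, smul_eq_mul, add_sub_cancel_right]

lemma eq_zero_of_forall_p_pow_dvd {x : ℤ_[p]} (h : ∀ n, (p : ℤ_[p]) ^ n ∣ x) : x = 0 := by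
  have := Ideal.iInf_pow_eq_bot_of_isDomain (Ideal.span {(p : ℤ_[p])}) ?_
  · rw [← Ideal.mem_bot, ← this, Ideal.mem_iInf]
    intro n
    rw [Ideal.span_singleton_pow, Ideal.mem_span_singleton]
    exact h n
  · rw [← maximalIdeal_eq_span_p]; exact Ideal.IsMaximal.ne_top inferInstance

lemma exists_intCast_add_p_mul (x : ℤ_[p]) : ∃ (d : ℤ) (y : ℤ_[p]), x = d + p * y := by
  have hx := sub_zmodRepr_mem x
  rw [maximalIdeal_eq_span_p, Ideal.mem_span_singleton'] at hx
  obtain ⟨y, hy⟩ := hx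
  exact ⟨x.zmodRepr, y, by rw [mul_comm, hy]; push_cast; ring⟩

lemma exists_intCast_of_intCast_eq_p_mul {m : ℤ} {y : ℤ_[p]} (h : (m : ℤ_[p]) = p * y) :
    ∃ k : ℤ, y = k := by
  obtain ⟨k, rfl⟩ := (pow_p_dvd_int_iff 1 m).1 (by rw [pow_one, h]; exact dvd_mul_right _ _)
  refine ⟨k, mul_left_cancel₀ (a := (p : ℤ_[p])) (mod_cast (Fact.out : p.Prime).ne_zero) ?_⟩
  rw [← h, pow_one, Int.cast_mul, Int.cast_natCast]

lemma exists_pSeries_intCast_eq (x : ℤ_[p]) :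
    ∃ d : ℕ → ℤ, pSeries p (fun j ↦ (d j : ℤ_[p])) = x := by
  -- `d n` is the digit of the `n`-th remainder `y n`; `e n` is the error of the tail expansion
  choose digit quot h using exists_intCast_add_p_mul (p := p)
  set y : ℕ → ℤ_[p] := fun n ↦ quot^[n] x
  set d : ℕ → ℤ := fun n ↦ digit (y n)
  set e : ℕ → ℤ_[p] := fun n ↦ pSeries p (fun j ↦ (d (n + j) : ℤ_[p])) - y n
  have he : ∀ n, e n = p * e (n + 1) := by
    intro n
    simp only [e, pSeries_tail_eq_add_p_mul (fun j ↦ (d j : ℤ_[p])) n]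
    conv_lhs => rw [h (y n)]
    simp only [y, d, Function.iterate_succ_apply']
    ring
  have he0 : ∀ n, e 0 = p ^ n * e n := by
    intro n
    induction n with
    | zero => rw [pow_zero, one_mul]
    | succ n ih => rw [ih, he n, pow_succ, mul_assoc]
  refine ⟨d, sub_eq_zero.1 ?_⟩
  simpa [e, y] using eq_zero_of_forall_p_pow_dvd fun n ↦ Dvd.intro _ (he0 n).symm

lemma exists_sub_p_mul_eq_of_pSeries_eq_intCast {g : ℕ → ℤ} {n : ℤ}
    (h : pSeries p (fun j ↦ (g j : ℤ_[p])) = n) : ∃ f : ℕ → ℤ, ∀ i, f i - p * f (i + 1) = g i := by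
  have htail : ∀ i, ∃ m : ℤ, pSeries p (fun j ↦ (g (i + j) : ℤ_[p])) = m := by
    intro i
    induction i with
    | zero => exact ⟨n, by simpa using h⟩
    | succ i ih =>
      obtain ⟨m, hm⟩ := ih
      refine (exists_intCast_of_intCast_eq_p_mul (m := m - g i) ?_).imp fun _ ↦ id
      rw [Int.cast_sub, ← hm, pSeries_tail_eq_add_p_mul (fun j ↦ (g j : ℤ_[p])),
        add_sub_cancel_left]
  choose f hf using htail
  refine ⟨f, fun i ↦ Int.cast_injective (α := ℤ_[p]) ?_⟩
  push_cast
  rw [← hf, ← hf, pSeries_tail_eq_add_p_mul (fun j ↦ (g j : ℤ_[p])) i]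
  ring

end PadicInt

namespace Lim1

open PadicInt

variable (p : ℕ) [Fact p.Prime]

def differential : (ℕ → ℤ) →+ (ℕ → ℤ) :=
  AddMonoidHom.mk' (fun g : ℕ → ℤ => fun i => g i - (p : ℤ) * g (i + 1))
    fun a b ↦ by funext i; simp only [Pi.add_apply]; ring

noncomputable def toPadicInt : (ℕ → ℤ) →+ ℤ_[p] :=
  (pSeries p).toAddMonoidHom.comp ((Int.castRingHom ℤ_[p]).toAddMonoidHom.compLeft ℕ)

lemma toPadicInt_apply (g : ℕ → ℤ) : toPadicInt p g = pSeries p (fun j ↦ (g j : ℤ_[p])) := rfl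

lemma toPadicInt_surjective : Function.Surjective (toPadicInt p) :=
  exists_pSeries_intCast_eq

lemma toPadicInt_differential (f : ℕ → ℤ) : toPadicInt p (differential p f) = f 0 := by
  rw [toPadicInt_apply]
  convert pSeries_sub_p_smul_shift (fun j ↦ (f j : ℤ_[p])) using 2
  funext j
  simp [differential]

lemma toPadicInt_mem_range_intCast_iff (g : ℕ → ℤ) :
    toPadicInt p g ∈ (Int.castRingHom ℤ_[p]).toAddMonoidHom.range ↔ g ∈ (differential p).range := by
  constructor
  · rintro ⟨n, hn⟩
    obtain ⟨f, hf⟩ := exists_sub_p_mul_eq_of_pSeries_eq_intCast hn.symm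
    exact ⟨f, funext hf⟩
  · rintro ⟨f, rfl⟩
    exact ⟨f 0, (toPadicInt_differential p f).symm⟩

end Lim1

theorem lim1_padic (p : ℕ) [Fact p.Prime] :
    Nonempty
      (((ℕ → ℤ) ⧸
          (AddMonoidHom.mk' (fun g : ℕ → ℤ => fun i => g i - (p : ℤ) * g (i + 1))
            (by intro a b; funext i; simp [Pi.add_apply]; ring)).range) ≃+
        (PadicInt p ⧸ ((Int.castRingHom (PadicInt p)).toAddMonoidHom.range))) := by
  let ψ := (QuotientAddGroup.mk' (Int.castRingHom ℤ_[p]).toAddMonoidHom.range).comp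
    (Lim1.toPadicInt p)
  have hker : (Lim1.differential p).range = ψ.ker := by
    ext g
    rw [AddMonoidHom.mem_ker, AddMonoidHom.comp_apply, QuotientAddGroup.mk'_apply,
      QuotientAddGroup.eq_zero_iff, Lim1.toPadicInt_mem_range_intCast_iff]
  have hψ : Function.Surjective ψ :=
    (QuotientAddGroup.mk'_surjective _).comp (Lim1.toPadicInt_surjective p)
  exact ⟨(QuotientAddGroup.quotientAddEquivOfEq hker).trans
    (QuotientAddGroup.quotientKerEquivOfSurjective ψ hψ)⟩
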